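/- A family of POVM elements {Π₀, Π₁, …, Π_m} unambiguously discriminates mixed states ρ₁,…,ρ_m (i.e., Π_i ρ_j = 0 and ρ_j Π_i = 0 for all i ≠ j, 1 ≤ i,j ≤ m) if and only if Π_i ρ̃_j = 0 and ρ̃_j Π_i = 0 for all 1 ≤ i ≤ m and 0 ≤ j ≤ m with i ≠ j, where ρ̃_j are the cores and ρ̃_0 = Σ_i ρ̂_i. -/

import Mathlib

open Matrix BigOperators ComplexOrder

/-- Support of a matrix (for a PSD matrix, the orthocomplement of its kernel). -/
noncomputable def supp {n : ℕ} (A : Matrix (Fin n) (Fin n) ℂ) : Submodule ℂ (Fin n → ℂ) :=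
  LinearMap.range A.mulVecLin

/-- For Hermitian matrices, `A * B = 0` implies `B * A = 0`. -/
lemma herm_mul_comm_zero {n : ℕ} {A B : Matrix (Fin n) (Fin n) ℂ}
    (hA : A.IsHermitian) (hB : B.IsHermitian) (h : A * B = 0) : B * A = 0 := by
  have : (A * B)ᴴ = 0 := by rw [h]; simp
  rwa [Matrix.conjTranspose_mul, hA.eq, hB.eq] at this

/-- A matrix annihilating all vectors is zero. -/
lemma eq_zero_of_mulVec {n : ℕ} {M : Matrix (Fin n) (Fin n) ℂ}
    (h : ∀ x, M *ᵥ x = 0) : M = 0 := by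
  ext i j
  have := congrFun (h (Pi.single j 1)) i
  simpa using this

/-- Sum of PSD matrices is PSD. -/
lemma psd_sum {n : ℕ} {ι : Type*} (s : Finset ι) (B : ι → Matrix (Fin n) (Fin n) ℂ)
    (hB : ∀ k ∈ s, (B k).PosSemidef) : (∑ k ∈ s, B k).PosSemidef :=
  Finset.sum_induction B _ (fun _ _ ha hb => ha.add hb) Matrix.PosSemidef.zero hB

/-- Matrix sums distribute over `mulVec`. -/
lemma sum_mulVec' {n : ℕ} {ι : Type*} (s : Finset ι) (B : ι → Matrix (Fin n) (Fin n) ℂ)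
    (y : Fin n → ℂ) : (∑ k ∈ s, B k) *ᵥ y = ∑ k ∈ s, B k *ᵥ y := by
  ext i
  simp only [Matrix.mulVec, dotProduct, Matrix.sum_apply, Finset.sum_mul, Finset.sum_apply]
  rw [Finset.sum_comm]

/-- Splitting lemma: if a PSD matrix annihilates a sum of PSD matrices, it annihilates each. -/
lemma mul_sum_zero_split {n : ℕ} {A : Matrix (Fin n) (Fin n) ℂ} (hA : A.PosSemidef)
    {ι : Type*} (s : Finset ι) (B : ι → Matrix (Fin n) (Fin n) ℂ)
    (hB : ∀ k ∈ s, (B k).PosSemidef)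
    (h : A * ∑ k ∈ s, B k = 0) : ∀ k ∈ s, A * B k = 0 := by
  have hS : (∑ k ∈ s, B k).PosSemidef := psd_sum s B hB
  have hSA : (∑ k ∈ s, B k) * A = 0 := herm_mul_comm_zero hA.1 hS.1 h
  intro k hk
  have hBkA : B k * A = 0 := by
    apply eq_zero_of_mulVec
    intro x
    set y := A *ᵥ x with hy
    have hSy : (∑ k ∈ s, B k) *ᵥ y = 0 := by
      rw [hy, Matrix.mulVec_mulVec, hSA, Matrix.zero_mulVec]
    have hsum : ∑ l ∈ s, star y ⬝ᵥ B l *ᵥ y = 0 := by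
      have h1 : star y ⬝ᵥ (∑ k ∈ s, B k) *ᵥ y = 0 := by rw [hSy, dotProduct_zero]
      rw [sum_mulVec'] at h1
      rw [← h1]
      simp [dotProduct, Finset.sum_apply, Finset.mul_sum]
      rw [Finset.sum_comm]
    have hterm := (Finset.sum_eq_zero_iff_of_nonneg (fun l hl => (hB l hl).dotProduct_mulVec_nonneg y)).mp hsum
    have hBky : B k *ᵥ y = 0 := ((hB k hk).dotProduct_mulVec_zero_iff y).mp (hterm k hk)
    rw [← Matrix.mulVec_mulVec, ← hy, hBky]
  exact herm_mul_comm_zero (hB k hk).1 hA.1 hBkA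

/-- `A * B = 0` iff the support of `B` is contained in the kernel of `A`. -/
lemma mul_eq_zero_iff_supp_le_ker {n : ℕ} (A B : Matrix (Fin n) (Fin n) ℂ) :
    A * B = 0 ↔ supp B ≤ LinearMap.ker A.mulVecLin := by
  constructor
  · intro h x hx
    obtain ⟨y, rfl⟩ := hx
    simp only [LinearMap.mem_ker, Matrix.mulVecLin_apply, Matrix.mulVec_mulVec]
    rw [h, Matrix.zero_mulVec]
  · intro h
    apply eq_zero_of_mulVec
    intro x
    have : B.mulVecLin x ∈ supp B := LinearMap.mem_range_self _ x
    have := h this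
    simp only [LinearMap.mem_ker, Matrix.mulVecLin_apply, Matrix.mulVec_mulVec] at this ⊢
    exact this

theorem stmt_13 {n m : ℕ}
    (ρ : Fin m → Matrix (Fin n) (Fin n) ℂ) (hρ : ∀ i, (ρ i).PosSemidef)
    (ρhat ρtil : Fin m → Matrix (Fin n) (Fin n) ℂ)
    (hhat : ∀ i, (ρhat i).PosSemidef) (htil : ∀ i, (ρtil i).PosSemidef)
    (hdecomp : ∀ i, ρhat i + ρtil i = ρ i)
    (hsupphat : ∀ i, supp (ρhat i) =
      supp (ρ i) ⊓ ⨆ j ∈ Finset.univ \ {i}, supp (ρ j))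
    (hsupptil : ∀ i, supp (ρtil i) ⊓
      (supp (ρ i) ⊓ ⨆ j ∈ Finset.univ \ {i}, supp (ρ j)) = ⊥)
    (ρt : Fin (m + 1) → Matrix (Fin n) (Fin n) ℂ)
    (hρt0 : ρt 0 = ∑ i, ρhat i) (hρts : ∀ i : Fin m, ρt i.succ = ρtil i)
    (E : Fin m → Matrix (Fin n) (Fin n) ℂ) (hE : ∀ i, (E i).PosSemidef) :
    (∀ i j : Fin m, i ≠ j → E i * ρ j = 0 ∧ ρ j * E i = 0) ↔
    (∀ (i : Fin m) (j : Fin (m + 1)), j ≠ i.succ → E i * ρt j = 0 ∧ ρt j * E i = 0) := by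
  constructor
  · intro h i
    -- E i annihilates ρhat k for every k
    have hsplit : ∀ k, k ≠ i → E i * ρhat k = 0 ∧ E i * ρtil k = 0 := by
      intro k hk
      have hEρ : E i * ρ k = 0 := (h i k (fun e => hk e.symm)).1
      have : E i * (ρhat k + ρtil k) = 0 := by rw [hdecomp k]; exact hEρ
      have h2 : E i * ∑ l ∈ ({0, 1} : Finset (Fin 2)),
          (fun l : Fin 2 => if l = 0 then ρhat k else ρtil k) l = 0 := by
        simpa using this
      have := mul_sum_zero_split (hE i) ({0, 1} : Finset (Fin 2))
        (fun l : Fin 2 => if l = 0 then ρhat k else ρtil k)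
        (by intro l _; by_cases hl : l = 0 <;> simp [hl, hhat k, htil k]) h2
      constructor
      · simpa using this 0 (by simp)
      · simpa using this 1 (by simp)
    have hhat_all : ∀ k, E i * ρhat k = 0 := by
      intro k
      by_cases hk : k = i
      · subst hk
        rw [mul_eq_zero_iff_supp_le_ker]
        rw [hsupphat k]
        refine le_trans inf_le_right ?_
        apply iSup₂_le
        intro j hj
        have hji : j ≠ k := by simpa using hj
        rw [← mul_eq_zero_iff_supp_le_ker]
        exact (h k j (fun e => hji e.symm)).1
      · exact (hsplit k hk).1
    intro j hj
    have heq : E i * ρt j = 0 := by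
      induction j using Fin.cases with
      | zero =>
        rw [hρt0, Finset.mul_sum]
        exact Finset.sum_eq_zero fun k _ => hhat_all k
      | succ k =>
        have hk : k ≠ i := fun e => hj (by rw [e])
        rw [hρts k]
        exact (hsplit k hk).2
    refine ⟨heq, ?_⟩
    have hρtj : (ρt j).PosSemidef := by
      induction j using Fin.cases with
      | zero => rw [hρt0]; exact psd_sum _ _ (fun k _ => hhat k)
      | succ k => rw [hρts k]; exact htil k
    exact herm_mul_comm_zero (hE i).1 hρtj.1 heq
  · intro h i j hij
    have htilz : E i * ρtil j = 0 := by
      have := (h i j.succ (fun e => hij (Fin.succ_injective _ e).symm)).1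
      rwa [hρts j] at this
    have hhatz : E i * ρhat j = 0 := by
      have h0 : E i * ρt 0 = 0 := (h i 0 (fun e => Fin.succ_ne_zero i e.symm)).1
      rw [hρt0] at h0
      exact mul_sum_zero_split (hE i) Finset.univ ρhat (fun k _ => hhat k) h0 j (Finset.mem_univ j)
    have hz : E i * ρ j = 0 := by
      rw [← hdecomp j, Matrix.mul_add, hhatz, htilz, add_zero]
    exact ⟨hz, herm_mul_comm_zero (hE i).1 (hρ j).1 hz⟩
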